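/- arXiv:1504.03222 — 2 statements merged into one kernel-verified Lean document; each statement's English description precedes it below -/
import Mathlib

section
/- Let A be an associative unital ring and let s1, s2 ∈ A be idempotents (s1² = s1 and s2² = s2) such that ⟨s1,s2⟩^k = ⟨s2,s1⟩^k for some integer k ≥ 1. Then ⟨1−s1, 1−s2⟩^k = ⟨1−s2, 1−s1⟩^k. -/
/-- The alternating product `⟨t,s⟩^k` with `k` factors whose rightmost factor is `s`:
`⟨t,s⟩^{2i} = (ts)^i` and `⟨t,s⟩^{2i+1} = s(ts)^i`. -/
def altProd {A : Type*} [Monoid A] (t s : A) (k : ℕ) : A :=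
  if Even k then (t * s) ^ (k / 2) else s * (t * s) ^ (k / 2)

/-!
Peeling off the rightmost factor, `⟨t,s⟩^(k+1) = ⟨s,t⟩^k * s`, and `(1 - a) * a = 0` give, by
induction, `⟨1-a,1-b⟩^(k+1) * a = (-1)^k * (⟨b,a⟩^(k+1) - ⟨b,a⟩^(k+2))` for idempotents `a, b`.
Expanding `⟨1-a,1-b⟩^(k+2) = ⟨1-b,1-a⟩^(k+1) * (1 - b)` with this yields, for every `k`,
`⟨1-a,1-b⟩^k - ⟨1-b,1-a⟩^k = (-1)^k * (⟨a,b⟩^k - ⟨b,a⟩^k)`,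
whose right-hand side vanishes under the hypothesis.
-/
section Monoid

variable {M : Type*} [Monoid M]

theorem altProd_zero (t s : M) : altProd t s 0 = 1 := by
  simp [altProd]

theorem altProd_succ (t s : M) (k : ℕ) : altProd t s (k + 1) = altProd s t k * s := by
  unfold altProd
  rcases Nat.even_or_odd' k with ⟨i, rfl | rfl⟩
  · have hodd : ¬Even (2 * i + 1) := Nat.not_even_two_mul_add_one i
    rw [if_neg hodd, if_pos (even_two_mul i), show (2 * i + 1) / 2 = 2 * i / 2 by omega,
      mul_pow_mul]
  · have heven : Even (2 * i + 1 + 1) := ⟨i + 1, by omega⟩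
    rw [if_pos heven, if_neg (Nat.not_even_two_mul_add_one i),
      show (2 * i + 1 + 1) / 2 = (2 * i + 1) / 2 + 1 by omega, pow_succ', mul_assoc, mul_assoc,
      mul_pow_mul]

theorem altProd_one (t s : M) : altProd t s 1 = s := by
  rw [altProd_succ, altProd_zero, one_mul]

end Monoid

section Ring

variable {R : Type*} [Ring R] {a b : R}

theorem altProd_one_sub_succ_mul_self (ha : IsIdempotentElem a) (t : R) (k : ℕ) :
    altProd t (1 - a) (k + 1) * a = 0 := by
  rw [altProd_succ, mul_assoc, ha.one_sub_mul_self, mul_zero]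

theorem altProd_one_sub_succ_mul (ha : IsIdempotentElem a) (hb : IsIdempotentElem b) (k : ℕ) :
    altProd (1 - a) (1 - b) (k + 1) * a =
      (-1) ^ k * (altProd b a (k + 1) - altProd b a (k + 2)) := by
  induction k generalizing a b with
  | zero =>
    rw [altProd_succ, altProd_zero, altProd_one, altProd_succ, altProd_one]
    noncomm_ring
  | succ k ih =>
    calc altProd (1 - a) (1 - b) (k + 2) * a
        = altProd (1 - b) (1 - a) (k + 1) * a - altProd (1 - b) (1 - a) (k + 1) * b * a := by
          rw [altProd_succ, mul_sub, mul_one, sub_mul]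
      _ = -((-1) ^ k * (altProd a b (k + 1) * a - altProd a b (k + 2) * a)) := by
          rw [altProd_one_sub_succ_mul_self ha, ih hb ha, mul_assoc, mul_sub]
          noncomm_ring
      _ = (-1) ^ (k + 1) * (altProd b a (k + 2) - altProd b a (k + 3)) := by
          rw [← altProd_succ, ← altProd_succ, pow_succ]
          noncomm_ring

theorem altProd_one_sub_sub_altProd_one_sub (ha : IsIdempotentElem a)
    (hb : IsIdempotentElem b) :
    ∀ k : ℕ, altProd (1 - a) (1 - b) k - altProd (1 - b) (1 - a) k
      = (-1) ^ k * (altProd a b k - altProd b a k)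
  | 0 => by simp [altProd_zero]
  | 1 => by
    rw [altProd_one, altProd_one, altProd_one, altProd_one]
    noncomm_ring
  | k + 2 => by
    have ih := altProd_one_sub_sub_altProd_one_sub ha hb (k + 1)
    calc altProd (1 - a) (1 - b) (k + 2) - altProd (1 - b) (1 - a) (k + 2)
        = -(altProd (1 - a) (1 - b) (k + 1) - altProd (1 - b) (1 - a) (k + 1))
          - altProd (1 - b) (1 - a) (k + 1) * b + altProd (1 - a) (1 - b) (k + 1) * a := by
          rw [altProd_succ (1 - a) (1 - b) (k + 1), altProd_succ (1 - b) (1 - a) (k + 1)]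
          generalize altProd (1 - a) (1 - b) (k + 1) = U
          generalize altProd (1 - b) (1 - a) (k + 1) = V
          noncomm_ring
      _ = (-1) ^ (k + 2) * (altProd a b (k + 2) - altProd b a (k + 2)) := by
          rw [ih, altProd_one_sub_succ_mul ha hb, altProd_one_sub_succ_mul hb ha, pow_succ,
            pow_succ]
          noncomm_ring

end Ring

theorem stmt1_general {A : Type*} [Ring A] (s1 s2 : A)
    (h1 : s1 * s1 = s1) (h2 : s2 * s2 = s2) (k : ℕ)
    (hconf : altProd s1 s2 k = altProd s2 s1 k) :
    altProd (1 - s1) (1 - s2) k = altProd (1 - s2) (1 - s1) k := by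
  rw [← sub_eq_zero, altProd_one_sub_sub_altProd_one_sub h1 h2, hconf, sub_self, mul_zero]

/-- If `s1, s2` are idempotents of an associative unital ring satisfying
`⟨s1,s2⟩^k = ⟨s2,s1⟩^k` for some `k ≥ 1`, then `⟨1−s1, 1−s2⟩^k = ⟨1−s2, 1−s1⟩^k`. -/
theorem stmt1 {A : Type*} [Ring A] (s1 s2 : A)
    (h1 : s1 * s1 = s1) (h2 : s2 * s2 = s2) (k : ℕ) (hk : 1 ≤ k)
    (hconf : altProd s1 s2 k = altProd s2 s1 k) :
    altProd (1 - s1) (1 - s2) k = altProd (1 - s2) (1 - s1) k :=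
  stmt1_general s1 s2 h1 h2 k hconf
end

section
/- Let A be an associative unital ring and let s1, s2 ∈ A be idempotents such that σ := ⟨s1,s2⟩^k = ⟨s2,s1⟩^k for some integer k ≥ 1. Let I be the set of odd integers between 1 and k−1, and set γ1 = (1−s2)·Σ_{i∈I} ⟨s2,s1⟩^i and γ2 = (1−s1)·Σ_{i∈I} ⟨s1,s2⟩^i. Then γ1·s1 = γ1, γ2·s2 = γ2, s1·γ1 = s1 − σ, and s2·γ2 = s2 − σ. -/
lemma altProd_two_mul {A : Type*} [Monoid A] (t s : A) (m : ℕ) :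
    altProd t s (2 * m) = (t * s) ^ m := by
  simp [altProd]

lemma altProd_two_mul_add_one {A : Type*} [Monoid A] (t s : A) (m : ℕ) :
    altProd t s (2 * m + 1) = s * (t * s) ^ m := by
  have hdiv : (2 * m + 1) / 2 = m := by omega
  simp [altProd, hdiv]

lemma Finset.sum_filter_odd_Icc_one {M : Type*} [AddCommMonoid M] (f : ℕ → M) (k : ℕ) :
    ∑ i ∈ (Icc 1 (k - 1)).filter Odd, f i = ∑ m ∈ range (k / 2), f (2 * m + 1) := by
  have hodd : (Icc 1 (k - 1)).filter Odd = (range (k / 2)).image (fun m => 2 * m + 1) := by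
    ext i
    simp only [mem_filter, mem_Icc, mem_image, mem_range, Nat.odd_iff]
    constructor
    · rintro ⟨⟨hi1, hi2⟩, hodd⟩
      exact ⟨i / 2, by omega, by omega⟩
    · rintro ⟨m, hm, rfl⟩
      omega
  rw [hodd, sum_image fun a _ b _ hab => by omega]

section Idempotent

variable {A : Type*} [Ring A] {s : A} (t : A) (k : ℕ)

lemma sum_filter_odd_altProd :
    ∑ i ∈ (Finset.Icc 1 (k - 1)).filter Odd, altProd t s i
      = ∑ m ∈ Finset.range (k / 2), s * (t * s) ^ m := by
  simp only [Finset.sum_filter_odd_Icc_one, altProd_two_mul_add_one]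

lemma IsIdempotentElem.one_sub_mul_sum_altProd_mul (hs : IsIdempotentElem s) :
    (1 - t) * (∑ i ∈ (Finset.Icc 1 (k - 1)).filter Odd, altProd t s i) * s
      = (1 - t) * ∑ i ∈ (Finset.Icc 1 (k - 1)).filter Odd, altProd t s i := by
  have hterm (m : ℕ) : s * (t * s) ^ m * s = s * (t * s) ^ m := by
    rw [← mul_pow_mul, mul_assoc, hs.eq]
  simp only [sum_filter_odd_altProd, mul_assoc, Finset.sum_mul]
  simp only [← mul_assoc, hterm]

lemma IsIdempotentElem.mul_one_sub_mul_sum_altProd (hs : IsIdempotentElem s) :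
    s * ((1 - t) * ∑ i ∈ (Finset.Icc 1 (k - 1)).filter Odd, altProd t s i)
      = s - s * (t * s) ^ (k / 2) := by
  have hterm (m : ℕ) :
      s * (1 - t) * (s * (t * s) ^ m) = s * (t * s) ^ m - s * (t * s) ^ (m + 1) := by
    rw [mul_sub, mul_one, sub_mul, ← mul_assoc s s, hs.eq, pow_succ']
    simp only [mul_assoc]
  rw [sum_filter_odd_altProd, ← mul_assoc, Finset.mul_sum]
  simp only [hterm]
  rw [Finset.sum_range_sub' (fun m => s * (t * s) ^ m), pow_zero, mul_one]

lemma IsIdempotentElem.mul_pow_half_eq_altProd (hs : IsIdempotentElem s) (hk : 1 ≤ k)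
    (hconf : altProd s t k = altProd t s k) : s * (t * s) ^ (k / 2) = altProd s t k := by
  obtain ⟨m, rfl | rfl⟩ := Nat.even_or_odd' k
  · obtain ⟨n, rfl⟩ : ∃ n, m = n + 1 := ⟨m - 1, by omega⟩
    -- `(t s)^m = (s t)^m` by confluence, and the leading `s` is absorbed since `m ≥ 1`.
    have hdiv : 2 * (n + 1) / 2 = n + 1 := by omega
    rw [hdiv, ← altProd_two_mul, ← hconf, altProd_two_mul, pow_succ', ← mul_assoc, ← mul_assoc,
      hs.eq]
  · have hdiv : (2 * m + 1) / 2 = m := by omega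
    rw [hdiv, hconf, altProd_two_mul_add_one]

end Idempotent

/-- Let `s1, s2` be idempotents of an associative unital ring with
`σ := ⟨s1,s2⟩^k = ⟨s2,s1⟩^k` for some `k ≥ 1`.  With `I` the set of odd integers between `1`
and `k−1`, `γ1 = (1−s2)·Σ_{i∈I} ⟨s2,s1⟩^i` and `γ2 = (1−s1)·Σ_{i∈I} ⟨s1,s2⟩^i`, one has
`γ1·s1 = γ1`, `γ2·s2 = γ2`, `s1·γ1 = s1 − σ` and `s2·γ2 = s2 − σ`. -/
theorem stmt3 {A : Type*} [Ring A] (s1 s2 : A)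
    (h1 : s1 * s1 = s1) (h2 : s2 * s2 = s2) (k : ℕ) (hk : 1 ≤ k)
    (hconf : altProd s1 s2 k = altProd s2 s1 k) :
    let σ : A := altProd s1 s2 k
    let I : Finset ℕ := (Finset.Icc 1 (k - 1)).filter (fun i => Odd i)
    let γ1 : A := (1 - s2) * ∑ i ∈ I, altProd s2 s1 i
    let γ2 : A := (1 - s1) * ∑ i ∈ I, altProd s1 s2 i
    γ1 * s1 = γ1 ∧ γ2 * s2 = γ2 ∧ s1 * γ1 = s1 - σ ∧ s2 * γ2 = s2 - σ := by
  have hs1 : IsIdempotentElem s1 := h1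
  have hs2 : IsIdempotentElem s2 := h2
  refine ⟨hs1.one_sub_mul_sum_altProd_mul s2 k, hs2.one_sub_mul_sum_altProd_mul s1 k, ?_, ?_⟩
  · rw [hs1.mul_one_sub_mul_sum_altProd, hs1.mul_pow_half_eq_altProd s2 k hk hconf]
  · rw [hs2.mul_one_sub_mul_sum_altProd, hs2.mul_pow_half_eq_altProd s1 k hk hconf.symm, hconf]
end
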